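/- Let ψ₁, ψ₂ ∈ ℝ⁴ be linearly independent real unit vectors, let p ∈ (0,1), and set ρ = p ψ₁ψ₁ᵀ + (1−p) ψ₂ψ₂ᵀ, r_{ij} = ψᵢᵀ J ψ_j, ξ = p r₁₁ + (1−p) r₂₂ and χ = r₁₁r₂₂ − r₁₂². If χ > 0, then ξ² − 4p(1−p)χ ≥ 0, the concurrence satisfies C(ρ) = √(ξ² − 4p(1−p)χ), and C(ρ) < |ξ| ≤ p C(ψ₁ψ₁ᵀ) + (1−p) C(ψ₂ψ₂ᵀ). -/

import Mathlib

open Matrix Polynomial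

noncomputable section

/-- `J = σ_y ⊗ σ_y` as a complex 4×4 matrix (standard product basis). -/
def Jc : Matrix (Fin 4) (Fin 4) ℂ :=
  !![0, 0, 0, -1; 0, 0, 1, 0; 0, 1, 0, 0; -1, 0, 0, 0]

/-- `J = σ_y ⊗ σ_y` as a real 4×4 matrix (standard product basis). -/
def Jr : Matrix (Fin 4) (Fin 4) ℝ :=
  !![0, 0, 0, -1; 0, 0, 1, 0; 0, 1, 0, 0; -1, 0, 0, 0]

/-- The spin-flipped matrix `ρ̃ = J ρ̄ J`. -/
def spinFlip (ρ : Matrix (Fin 4) (Fin 4) ℂ) : Matrix (Fin 4) (Fin 4) ℂ :=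
  Jc * ρ.map (starRingEnd ℂ) * Jc

/-- The concurrence of a two-qubit density matrix `ρ`:
`max (0, √μ₁ − √μ₂ − √μ₃ − √μ₄)` where `μ₁ ≥ μ₂ ≥ μ₃ ≥ μ₄` are the (real,
nonnegative) eigenvalues of `ρ ρ̃` listed with multiplicity. -/
def concurrence (ρ : Matrix (Fin 4) (Fin 4) ℂ) : ℝ :=
  let l : List ℝ :=
    (((ρ * spinFlip ρ).charpoly.roots.map Complex.re).sort (· ≤ ·))
  max 0 (Real.sqrt (l.getD 3 0) - Real.sqrt (l.getD 2 0) -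
    Real.sqrt (l.getD 1 0) - Real.sqrt (l.getD 0 0))

/-- The (complex) density matrix of the pure state given by a real 4-vector `ψ`,
namely `ψ ψᵀ`. -/
def pureState (ψ : Fin 4 → ℝ) : Matrix (Fin 4) (Fin 4) ℂ :=
  (Matrix.vecMulVec ψ ψ).map Complex.ofReal

end

/-!
Write `ρ = Vᵀ D V` with `V` the `2 × 4` matrix with rows `ψ₁, ψ₂` and `D = diag(p, 1 - p)`.
Then `ρ ρ̃ = (Vᵀ D V J)²`, whose characteristic polynomial is `X²` times that of `(D R)²`,
where `R = V J Vᵀ = (rᵢⱼ)`. The `2 × 2` matrix `D R` has trace `ξ` and determinant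
`p (1 - p) χ > 0`, so its eigenvalues `(ξ ± √Δ) / 2`, `Δ = ξ² - 4 p (1 - p) χ`, are real of the
same sign, and `C(ρ)` is the difference of their absolute values, `√Δ < |ξ|`.
A pure state is the case `p = 1`, where this gives `C(ψ ψᵀ) = |ψᵀ J ψ|`.
-/

theorem Matrix.charpoly_sq_fin_two {R : Type*} [CommRing R] [Nontrivial R]
    (N : Matrix (Fin 2) (Fin 2) R) :
    (N ^ 2).charpoly = X ^ 2 - C (N.trace ^ 2 - 2 * N.det) * X + C (N.det ^ 2) := by
  have : (N ^ 2).trace = N.trace ^ 2 - 2 * N.det := by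
    simp only [trace_fin_two, det_fin_two, sq, mul_apply, Fin.sum_univ_two]
    ring
  rw [charpoly_fin_two, det_pow, this]

theorem Matrix.charpoly_transpose_mul_mul_sq {R m n : Type*} [CommRing R] [Fintype m]
    [DecidableEq m] [Fintype n] [DecidableEq n] (V : Matrix m n R) (D : Matrix m m R)
    (S : Matrix n n R) (hmn : Fintype.card m ≤ Fintype.card n) :
    ((Vᵀ * D * V * S) ^ 2).charpoly =
      X ^ (Fintype.card n - Fintype.card m) * ((D * (V * S * Vᵀ)) ^ 2).charpoly := by
  have : (Vᵀ * D * V * S) ^ 2 = Vᵀ * (D * V * S * Vᵀ * D * V * S) := by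
    simp only [sq, Matrix.mul_assoc]
  rw [this, charpoly_mul_comm_of_le _ _ hmn]
  simp only [sq, Matrix.mul_assoc]

theorem Jr_transpose : Jrᵀ = Jr := by
  ext i j; fin_cases i <;> fin_cases j <;> rfl

theorem Jr_map_ofReal : Jr.map Complex.ofReal = Jc := by
  ext i j; fin_cases i <;> fin_cases j <;> simp [Jr, Jc]

theorem spinFlip_map_ofReal (M : Matrix (Fin 4) (Fin 4) ℝ) :
    spinFlip (M.map Complex.ofReal) = (Jr * M * Jr).map Complex.ofReal := by
  have hconj : (M.map Complex.ofReal).map (starRingEnd ℂ) = M.map Complex.ofReal := by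
    ext i j; simp
  rw [spinFlip, hconj, ← Jr_map_ofReal]
  change _ = (Jr * M * Jr).map Complex.ofRealHom
  rw [Matrix.map_mul, Matrix.map_mul]
  rfl

theorem dotProduct_Jr_mulVec_comm (ψ φ : Fin 4 → ℝ) :
    ψ ⬝ᵥ (Jr *ᵥ φ) = φ ⬝ᵥ (Jr *ᵥ ψ) := by
  rw [dotProduct_mulVec, ← Jr_transpose, vecMul_transpose, Jr_transpose, dotProduct_comm]

theorem mixture_eq_map_ofReal (ψ₁ ψ₂ : Fin 4 → ℝ) (p q : ℝ) :
    p • pureState ψ₁ + q • pureState ψ₂ =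
      ((of ![ψ₁, ψ₂])ᵀ * diagonal ![p, q] * of ![ψ₁, ψ₂]).map Complex.ofReal := by
  ext i j
  simp [pureState, vecMulVec_apply, mul_apply, Fin.sum_univ_two, diagonal_apply]
  ring

theorem charpoly_mixture_mul_spinFlip (ψ₁ ψ₂ : Fin 4 → ℝ) (p q : ℝ) :
    ((p • pureState ψ₁ + q • pureState ψ₂) *
        spinFlip (p • pureState ψ₁ + q • pureState ψ₂)).charpoly =
      (X ^ 2 * ((diagonal ![p, q] * of ![ψ₁, ψ₂] * Jr * (of ![ψ₁, ψ₂])ᵀ) ^ 2).charpoly).map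
        Complex.ofRealHom := by
  set V : Matrix (Fin 2) (Fin 4) ℝ := of ![ψ₁, ψ₂]
  set M := Vᵀ * diagonal ![p, q] * V
  have h : (p • pureState ψ₁ + q • pureState ψ₂) *
      spinFlip (p • pureState ψ₁ + q • pureState ψ₂) =
        (M * (Jr * M * Jr)).map Complex.ofRealHom := by
    rw [mixture_eq_map_ofReal, spinFlip_map_ofReal]
    exact (Matrix.map_mul (L := M) (M := Jr * M * Jr) (f := Complex.ofRealHom)).symm
  have hsq : M * (Jr * M * Jr) = (Vᵀ * diagonal ![p, q] * V * Jr) ^ 2 := by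
    simp only [M, sq, Matrix.mul_assoc]
  rw [h, charpoly_map, hsq, charpoly_transpose_mul_mul_sq _ _ _ (by simp)]
  simp only [Fintype.card_fin, Matrix.mul_assoc]

theorem diagonal_mul_gram_apply (ψ : Fin 2 → Fin 4 → ℝ) (d : Fin 2 → ℝ) (i j : Fin 2) :
    (diagonal d * of ψ * Jr * (of ψ)ᵀ) i j = d i * (ψ i ⬝ᵥ (Jr *ᵥ ψ j)) := by
  rw [Matrix.mul_assoc, Matrix.mul_assoc, diagonal_mul, ← Matrix.mul_assoc, mul_apply]
  simp only [dotProduct, mulVec, mul_apply, of_apply, transpose_apply, Finset.mul_sum,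
    Finset.sum_mul]
  rw [Finset.sum_comm]
  simp only [mul_assoc]

theorem trace_diagonal_mul_gram (ψ₁ ψ₂ : Fin 4 → ℝ) (p q : ℝ) :
    (diagonal ![p, q] * of ![ψ₁, ψ₂] * Jr * (of ![ψ₁, ψ₂])ᵀ).trace =
      p * (ψ₁ ⬝ᵥ (Jr *ᵥ ψ₁)) + q * (ψ₂ ⬝ᵥ (Jr *ᵥ ψ₂)) := by
  simp [trace_fin_two, diagonal_mul_gram_apply]

theorem det_diagonal_mul_gram (ψ₁ ψ₂ : Fin 4 → ℝ) (p q : ℝ) :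
    (diagonal ![p, q] * of ![ψ₁, ψ₂] * Jr * (of ![ψ₁, ψ₂])ᵀ).det =
      p * q * ((ψ₁ ⬝ᵥ (Jr *ᵥ ψ₁)) * (ψ₂ ⬝ᵥ (Jr *ᵥ ψ₂)) - (ψ₁ ⬝ᵥ (Jr *ᵥ ψ₂)) ^ 2) := by
  simp [det_fin_two, diagonal_mul_gram_apply, dotProduct_Jr_mulVec_comm ψ₂ ψ₁]
  ring

theorem concurrence_eq_of_charpoly {ρ : Matrix (Fin 4) (Fin 4) ℂ} {a b : ℝ} (hb : 0 ≤ b)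
    (hab : b ≤ a)
    (h : (ρ * spinFlip ρ).charpoly = (X ^ 2 * ((X - C a) * (X - C b))).map Complex.ofRealHom) :
    concurrence ρ = √a - √b := by
  have hprod : (ρ * spinFlip ρ).charpoly =
      ((({0, 0, b, a} : Multiset ℝ).map Complex.ofReal).map fun z => X - C z).prod := by
    rw [h]
    simp [Polynomial.map_mul]
    ring
  have hsort :
      ((ρ * spinFlip ρ).charpoly.roots.map Complex.re).sort (· ≤ ·) = [0, 0, b, a] := by
    rw [hprod, roots_multiset_prod_X_sub_C, Multiset.map_map]
    simp only [Function.comp_def, Complex.ofReal_re, Multiset.map_id']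
    rw [Multiset.insert_eq_cons, Multiset.sort_cons, Multiset.insert_eq_cons, Multiset.sort_cons,
      Multiset.insert_eq_cons, Multiset.sort_cons, Multiset.sort_singleton]
    all_goals simp [hb, hab, hb.trans hab]
  simp only [concurrence, hsort]
  simp [Real.sqrt_le_sqrt hab]

theorem concurrence_mixture (ψ₁ ψ₂ : Fin 4 → ℝ) (p q a b : ℝ) (hb : 0 ≤ b) (hba : b ≤ a)
    (hsum : a + b = |p * (ψ₁ ⬝ᵥ (Jr *ᵥ ψ₁)) + q * (ψ₂ ⬝ᵥ (Jr *ᵥ ψ₂))|)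
    (hprod : a * b =
      p * q * ((ψ₁ ⬝ᵥ (Jr *ᵥ ψ₁)) * (ψ₂ ⬝ᵥ (Jr *ᵥ ψ₂)) - (ψ₁ ⬝ᵥ (Jr *ᵥ ψ₂)) ^ 2)) :
    concurrence (p • pureState ψ₁ + q • pureState ψ₂) = a - b := by
  have ha : 0 ≤ a := hb.trans hba
  have hsq : (p * (ψ₁ ⬝ᵥ (Jr *ᵥ ψ₁)) + q * (ψ₂ ⬝ᵥ (Jr *ᵥ ψ₂))) ^ 2 = (a + b) ^ 2 := by
    rw [hsum, sq_abs]
  rw [concurrence_eq_of_charpoly (sq_nonneg b) (pow_le_pow_left₀ hb hba 2),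
    Real.sqrt_sq ha, Real.sqrt_sq hb]
  rw [charpoly_mixture_mul_spinFlip, charpoly_sq_fin_two, trace_diagonal_mul_gram,
    det_diagonal_mul_gram, hsq, ← hprod]
  congr 2
  simp only [C_sub, C_mul, C_pow, C_add, C_ofNat]
  ring

theorem concurrence_pureState (ψ : Fin 4 → ℝ) :
    concurrence (pureState ψ) = |ψ ⬝ᵥ (Jr *ᵥ ψ)| := by
  have h := concurrence_mixture ψ ψ 1 0 |ψ ⬝ᵥ (Jr *ᵥ ψ)| 0 le_rfl (abs_nonneg _) (by simp)
    (by simp)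
  simpa using h

theorem rank_two_chi_pos_general
    (ψ₁ ψ₂ : Fin 4 → ℝ)
    (p : ℝ) (hp : p ∈ Set.Ioo (0 : ℝ) 1)
    (ρ : Matrix (Fin 4) (Fin 4) ℂ)
    (hρ : ρ = p • pureState ψ₁ + (1 - p) • pureState ψ₂)
    (r₁₁ r₂₂ r₁₂ ξ χ : ℝ)
    (hr₁₁ : r₁₁ = ψ₁ ⬝ᵥ (Jr *ᵥ ψ₁)) (hr₂₂ : r₂₂ = ψ₂ ⬝ᵥ (Jr *ᵥ ψ₂))
    (hr₁₂ : r₁₂ = ψ₁ ⬝ᵥ (Jr *ᵥ ψ₂))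
    (hξ : ξ = p * r₁₁ + (1 - p) * r₂₂) (hχ : χ = r₁₁ * r₂₂ - r₁₂ ^ 2)
    (hχpos : 0 < χ) :
    0 ≤ ξ ^ 2 - 4 * p * (1 - p) * χ ∧
    concurrence ρ = Real.sqrt (ξ ^ 2 - 4 * p * (1 - p) * χ) ∧
    concurrence ρ < |ξ| ∧
    |ξ| ≤ p * concurrence (pureState ψ₁) + (1 - p) * concurrence (pureState ψ₂) := by
  obtain ⟨hp0, hp1⟩ := hp
  have hq0 : 0 < 1 - p := by linarith
  set Δ := ξ ^ 2 - 4 * p * (1 - p) * χ with hΔ_def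
  have hΔ : 0 ≤ Δ := by
    have : Δ = (p * r₁₁ - (1 - p) * r₂₂) ^ 2 + 4 * (p * (1 - p)) * r₁₂ ^ 2 := by
      rw [hΔ_def, hξ, hχ]; ring
    rw [this]; positivity
  have hΔ_lt : √Δ < |ξ| := by
    rw [← Real.sqrt_sq_eq_abs]
    exact Real.sqrt_lt_sqrt hΔ (by have := mul_pos (mul_pos hp0 hq0) hχpos; linarith)
  have hconc : concurrence ρ = √Δ := by
    rw [hρ, concurrence_mixture ψ₁ ψ₂ p (1 - p) ((|ξ| + √Δ) / 2) ((|ξ| - √Δ) / 2)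
      (by linarith) (by linarith [Real.sqrt_nonneg Δ]) (by rw [← hr₁₁, ← hr₂₂, ← hξ]; ring)
      (by rw [← hr₁₁, ← hr₂₂, ← hr₁₂, ← hχ]
          linear_combination (sq_abs ξ - Real.sq_sqrt hΔ) / 4)]
    ring
  refine ⟨hΔ, hconc, hconc ▸ hΔ_lt, ?_⟩
  rw [concurrence_pureState, concurrence_pureState, ← hr₁₁, ← hr₂₂, hξ]
  calc |p * r₁₁ + (1 - p) * r₂₂| ≤ |p * r₁₁| + |(1 - p) * r₂₂| := abs_add_le _ _
    _ = p * |r₁₁| + (1 - p) * |r₂₂| := by rw [abs_mul, abs_mul, abs_of_pos hp0, abs_of_pos hq0]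

/-- Rank-2 mixtures of real pure states with `χ = r₁₁r₂₂ − r₁₂² > 0`:
the concurrence is `√(ξ² − 4p(1−p)χ)`, which is strictly below `|ξ|` and hence
below the weighted sum of pure-state concurrences. -/
theorem rank_two_chi_pos
    (ψ₁ ψ₂ : Fin 4 → ℝ) (hind : LinearIndependent ℝ ![ψ₁, ψ₂])
    (h₁ : ∑ i, ψ₁ i ^ 2 = 1) (h₂ : ∑ i, ψ₂ i ^ 2 = 1)
    (p : ℝ) (hp : p ∈ Set.Ioo (0 : ℝ) 1)
    (ρ : Matrix (Fin 4) (Fin 4) ℂ)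
    (hρ : ρ = p • pureState ψ₁ + (1 - p) • pureState ψ₂)
    (r₁₁ r₂₂ r₁₂ ξ χ : ℝ)
    (hr₁₁ : r₁₁ = ψ₁ ⬝ᵥ (Jr *ᵥ ψ₁)) (hr₂₂ : r₂₂ = ψ₂ ⬝ᵥ (Jr *ᵥ ψ₂))
    (hr₁₂ : r₁₂ = ψ₁ ⬝ᵥ (Jr *ᵥ ψ₂))
    (hξ : ξ = p * r₁₁ + (1 - p) * r₂₂) (hχ : χ = r₁₁ * r₂₂ - r₁₂ ^ 2)
    (hχpos : 0 < χ) :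
    0 ≤ ξ ^ 2 - 4 * p * (1 - p) * χ ∧
    concurrence ρ = Real.sqrt (ξ ^ 2 - 4 * p * (1 - p) * χ) ∧
    concurrence ρ < |ξ| ∧
    |ξ| ≤ p * concurrence (pureState ψ₁) + (1 - p) * concurrence (pureState ψ₂) :=
  rank_two_chi_pos_general ψ₁ ψ₂ p hp ρ hρ r₁₁ r₂₂ r₁₂ ξ χ hr₁₁ hr₂₂ hr₁₂ hξ hχ hχpos
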